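/- arXiv:2410.03407 — 4 statements merged into one kernel-verified Lean document; each statement's English description precedes it below -/
import Mathlib

section
/- Let d ≥ 1, L > 0, ε₀ > 0, and let R be the DJW18 randomizer with parameters (d, L, ε₀). For every x ∈ ℝ^d with ‖x‖₂ ≤ L, the output of R is an unbiased estimate of x: E[R(x)] = x. -/
open MeasureTheory

/-- `sign(t) = 1` if `t ≥ 0` and `−1` if `t < 0`. -/
noncomputable def sgn (t : ℝ) : ℝ := if t < 0 then -1 else 1

open Classical in
/-- The unit direction of `x` (with the fixed unit vector `u` used for `x = 0`). -/
noncomputable def unitDir {d : ℕ} (u x : EuclideanSpace ℝ (Fin d)) :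
    EuclideanSpace ℝ (Fin d) :=
  if x = 0 then u else ‖x‖⁻¹ • x

/-- The normalization constant `M = L·(√π/2)·(d·Γ((d+1)/2)/Γ(d/2 + 1))·((e^{ε₀}+1)/(e^{ε₀}−1))`
of the DJW18 randomizer. -/
noncomputable def djwM (d : ℕ) (L ε₀ : ℝ) : ℝ :=
  L * (Real.sqrt Real.pi / 2) *
    ((d : ℝ) * Real.Gamma (((d : ℝ) + 1) / 2) / Real.Gamma ((d : ℝ) / 2 + 1)) *
    ((Real.exp ε₀ + 1) / (Real.exp ε₀ - 1))

/-- `σ` is the uniform probability measure on the unit sphere `S^{d−1} ⊂ ℝ^d`: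
a probability measure concentrated on the unit sphere and invariant under every
linear isometry (rotation/reflection) of `ℝ^d`. -/
def IsUniformSphereMeasure {d : ℕ} (σ : Measure (EuclideanSpace ℝ (Fin d))) : Prop :=
  IsProbabilityMeasure σ ∧ (∀ᵐ v ∂σ, ‖v‖ = 1) ∧
    ∀ f : EuclideanSpace ℝ (Fin d) ≃ₗᵢ[ℝ] EuclideanSpace ℝ (Fin d), σ.map f = σ

/-- The distribution of the output of the DJW18 randomizer with parameters
`(d, L, ε₀)` on input `x`: (i) `x̄ = ±L·x/‖x‖` with probabilities
`1/2 + ‖x‖/(2L)` and `1/2 − ‖x‖/(2L)`; (ii) `v` uniform on the unit sphere,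
flipped so that `⟨v, x̄⟩ ≥ 0`; (iii) `U` Bernoulli with `Pr[U = 1] = e^{ε₀}/(e^{ε₀}+1)`;
(iv) output `(2U−1)·M·v`. Here `σ` is the uniform sphere measure and `u` the fixed
unit vector used in place of `x/‖x‖` for `x = 0`. -/
noncomputable def djw18 (d : ℕ) (L ε₀ : ℝ) (u : EuclideanSpace ℝ (Fin d))
    (σ : Measure (EuclideanSpace ℝ (Fin d))) (x : EuclideanSpace ℝ (Fin d)) :
    Measure (EuclideanSpace ℝ (Fin d)) :=
  let M := djwM d L ε₀
  let pU := Real.exp ε₀ / (Real.exp ε₀ + 1)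
  let pS := 1 / 2 + ‖x‖ / (2 * L)
  let out : ℝ → ℝ → EuclideanSpace ℝ (Fin d) → EuclideanSpace ℝ (Fin d) :=
    fun s c v => (c * M * sgn (s * (inner ℝ v (unitDir u x) : ℝ))) • v
  ENNReal.ofReal pS •
      (ENNReal.ofReal pU • σ.map (out 1 1) + ENNReal.ofReal (1 - pU) • σ.map (out 1 (-1))) +
    ENNReal.ofReal (1 - pS) •
      (ENNReal.ofReal pU • σ.map (out (-1) 1) +
        ENNReal.ofReal (1 - pU) • σ.map (out (-1) (-1)))


section DJWAux

open Real Set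

variable {d : ℕ}

local notation "E" => EuclideanSpace ℝ (Fin d)

variable {σ : Measure (EuclideanSpace ℝ (Fin d))}

lemma sgn_mul_self (t : ℝ) : sgn t * t = |t| := by
  unfold sgn
  rcases lt_or_ge t 0 with h | h
  · rw [if_pos h, abs_of_neg h]; ring
  · rw [if_neg (not_lt.2 h), abs_of_nonneg h, one_mul]

lemma abs_sgn (t : ℝ) : |sgn t| = 1 := by
  unfold sgn; split <;> simp

lemma measurable_sgn : Measurable sgn :=
  Measurable.ite measurableSet_Iio measurable_const measurable_const

lemma gauss1 : ∫ t : ℝ, Real.exp (-π * t ^ 2) = 1 := by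
  rw [integral_gaussian, div_self pi_ne_zero, sqrt_one]

lemma gauss2 : ∫ t : ℝ, |t| * Real.exp (-π * t ^ 2) = 1 / π := by
  have h : ∀ t : ℝ, |t| * Real.exp (-π * t ^ 2) = |t| * Real.exp (-π * |t| ^ 2) := by
    intro t; rw [sq_abs]
  rw [funext h, integral_comp_abs (f := fun r => r * Real.exp (-π * r ^ 2))]
  have : ∫ x in Ioi (0:ℝ), x * Real.exp (-π * x ^ 2)
      = ∫ x in Ioi (0:ℝ), x ^ (1:ℝ) * Real.exp (-π * x ^ (2:ℝ)) := by
    refine setIntegral_congr_fun measurableSet_Ioi (fun x hx => ?_)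
    rw [rpow_one]
    norm_num [Real.rpow_natCast]
  rw [this, integral_rpow_mul_exp_neg_mul_rpow two_pos (by norm_num) pi_pos]
  norm_num [Real.Gamma_one]
  rw [Real.rpow_neg_one]
  field_simp

lemma norm_sq_eq_sum (z : EuclideanSpace ℝ (Fin d)) : ‖z‖ ^ 2 = ∑ i, z i ^ 2 := by
  rw [EuclideanSpace.norm_eq, sq_sqrt (by positivity)]
  simp [sq_abs]

lemma integrable_gauss_dom :
    Integrable (fun z : EuclideanSpace ℝ (Fin d) => Real.exp (-(π - 1) * ‖z‖ ^ 2)) := by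
  have hpres := (EuclideanSpace.volume_preserving_symm_measurableEquiv_toLp (Fin d)).symm
  rw [← hpres.integrable_comp_emb (MeasurableEquiv.measurableEmbedding _)]
  have : ((fun z : EuclideanSpace ℝ (Fin d) => Real.exp (-(π - 1) * ‖z‖ ^ 2)) ∘
      (MeasurableEquiv.toLp 2 (Fin d → ℝ)).symm.symm)
      = fun x : Fin d → ℝ => ∏ i, Real.exp (-(π - 1) * x i ^ 2) := by
    funext x
    simp only [Function.comp_apply]
    rw [norm_sq_eq_sum, Finset.mul_sum, Real.exp_sum]
    rfl
  rw [this]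
  exact Integrable.fintype_prod (fun i => integrable_exp_neg_mul_sq (by nlinarith [pi_gt_three]))

lemma integrable_norm_gauss :
    Integrable (fun z : EuclideanSpace ℝ (Fin d) => ‖z‖ * Real.exp (-π * ‖z‖ ^ 2)) := by
  refine Integrable.mono' integrable_gauss_dom ?_ (Filter.Eventually.of_forall fun z => ?_)
  · exact (continuous_norm.mul (((continuous_const.mul
      ((continuous_norm.pow 2))).rexp))).aestronglyMeasurable
  · have h1 : ‖z‖ ≤ Real.exp (‖z‖ ^ 2) := by
      nlinarith [Real.add_one_le_exp (‖z‖ ^ 2), sq_nonneg (‖z‖ - 1/2), norm_nonneg z,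
        sq_nonneg ‖z‖]
    have h2 : (0:ℝ) < Real.exp (-π * ‖z‖ ^ 2) := Real.exp_pos _
    rw [Real.norm_eq_abs, abs_of_nonneg (by positivity)]
    calc ‖z‖ * Real.exp (-π * ‖z‖ ^ 2) ≤ Real.exp (‖z‖ ^ 2) * Real.exp (-π * ‖z‖ ^ 2) := by
          exact mul_le_mul_of_nonneg_right h1 h2.le
      _ = Real.exp (-(π - 1) * ‖z‖ ^ 2) := by rw [← Real.exp_add]; ring_nf

lemma gauss3 (hd : 1 ≤ d) : ∫ y in Ioi (0:ℝ), y ^ (d - 1) • (y * Real.exp (-π * y ^ 2))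
    = π ^ (-((d:ℝ) + 1) / 2) * (1 / 2) * Real.Gamma (((d:ℝ) + 1) / 2) := by
  have : ∀ y ∈ Ioi (0:ℝ), y ^ (d - 1) • (y * Real.exp (-π * y ^ 2))
      = y ^ ((d:ℝ)) * Real.exp (-π * y ^ (2:ℝ)) := by
    intro y hy
    have hy0 : (0:ℝ) < y := hy
    rw [smul_eq_mul, ← mul_assoc, ← pow_succ, Nat.sub_add_cancel hd,
      ← Real.rpow_natCast y d, ← Real.rpow_natCast y 2]
    norm_num
  rw [setIntegral_congr_fun measurableSet_Ioi this,
    integral_rpow_mul_exp_neg_mul_rpow two_pos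
      (lt_of_lt_of_le neg_one_lt_zero (Nat.cast_nonneg d)) pi_pos]

lemma integral_norm_gauss_val (hd : 1 ≤ d) :
    ∫ z : EuclideanSpace ℝ (Fin d), ‖z‖ * Real.exp (-π * ‖z‖ ^ 2)
      = (d:ℝ) * Real.Gamma (((d:ℝ) + 1) / 2) / (2 * √π * Real.Gamma ((d:ℝ) / 2 + 1)) := by
  haveI : Nonempty (Fin d) := ⟨⟨0, hd⟩⟩
  have h := integral_fun_norm_addHaar (volume : Measure (EuclideanSpace ℝ (Fin d)))
    (fun r : ℝ => r * Real.exp (-π * r ^ 2))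
  rw [finrank_euclideanSpace_fin] at h
  rw [h, gauss3 hd, measureReal_def, EuclideanSpace.volume_ball, Fintype.card_fin, ENNReal.ofReal_one, one_pow,
    one_mul]
  have hG1 : 0 < Real.Gamma (((d:ℝ) + 1) / 2) := Real.Gamma_pos_of_pos (by positivity)
  have hG2 : 0 < Real.Gamma ((d:ℝ) / 2 + 1) := Real.Gamma_pos_of_pos (by positivity)
  have hπd : √π ^ d * π ^ (-((d:ℝ) + 1) / 2) = 1 / √π := by
    rw [Real.sqrt_eq_rpow, ← Real.rpow_natCast (π ^ ((1:ℝ)/2)) d, ← Real.rpow_mul pi_pos.le,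
      ← Real.rpow_add pi_pos, show (1:ℝ)/2 * (d:ℝ) + (-((d:ℝ)+1)/2) = -(1/2) by ring,
      Real.rpow_neg pi_pos.le, ← Real.sqrt_eq_rpow, one_div]
  rw [nsmul_eq_mul, smul_eq_mul, ENNReal.toReal_ofReal (by positivity)]
  have hs : (0:ℝ) < √π := Real.sqrt_pos.mpr pi_pos
  rw [show (d:ℝ) * (√π ^ d / Real.Gamma ((d:ℝ)/2+1) * (π ^ (-((d:ℝ) + 1) / 2) * (1 / 2)
      * Real.Gamma (((d:ℝ)+1)/2)))
    = (d:ℝ) * Real.Gamma (((d:ℝ)+1)/2) * (√π ^ d * π ^ (-((d:ℝ) + 1) / 2))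
      / (2 * Real.Gamma ((d:ℝ)/2+1)) from by ring, hπd]
  field_simp

lemma integral_inner_gauss (hd : 1 ≤ d) (v : EuclideanSpace ℝ (Fin d)) (hv : ‖v‖ = 1) :
    ∫ z : EuclideanSpace ℝ (Fin d), |(inner ℝ z v : ℝ)| * Real.exp (-π * ‖z‖ ^ 2) = 1 / π := by
  set i0 : Fin d := ⟨0, hd⟩
  set v0 : EuclideanSpace ℝ (Fin d) := EuclideanSpace.single i0 1 with hv0def
  have hv0 : ‖v0‖ = 1 := by simp [hv0def, EuclideanSpace.norm_single]
  set f := Submodule.reflection (Submodule.span ℝ {v0 - v})ᗮ with hfdef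
  have hfv0 : f v0 = v := Submodule.reflection_sub (by rw [hv0, hv])
  have hcomp : ∀ z : EuclideanSpace ℝ (Fin d),
      |(inner ℝ (f z) v : ℝ)| * Real.exp (-π * ‖f z‖ ^ 2)
        = |(inner ℝ z v0 : ℝ)| * Real.exp (-π * ‖z‖ ^ 2) := by
    intro z
    rw [← hfv0, LinearIsometryEquiv.inner_map_map, LinearIsometryEquiv.norm_map]
  have hmp : MeasurePreserving (f : EuclideanSpace ℝ (Fin d) → EuclideanSpace ℝ (Fin d))
      volume volume := f.measurePreserving
  rw [← hmp.integral_comp (f.toHomeomorph.measurableEmbedding)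
    (fun z => |(inner ℝ z v : ℝ)| * Real.exp (-π * ‖z‖ ^ 2))]
  simp only [hcomp]
  -- now at v0
  have hpres := (EuclideanSpace.volume_preserving_symm_measurableEquiv_toLp (Fin d)).symm
  rw [← hpres.integral_comp (MeasurableEquiv.measurableEmbedding _)]
  have hre : ∀ x : Fin d → ℝ,
      |(inner ℝ ((MeasurableEquiv.toLp 2 (Fin d → ℝ)).symm.symm x) v0 : ℝ)|
          * Real.exp (-π * ‖(MeasurableEquiv.toLp 2 (Fin d → ℝ)).symm.symm x‖ ^ 2)
        = ∏ i, (if i = i0 then |x i| * Real.exp (-π * x i ^ 2) else Real.exp (-π * x i ^ 2)) := by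
    intro x
    have hz : ∀ i, ((MeasurableEquiv.toLp 2 (Fin d → ℝ)).symm.symm x) i = x i := fun i => rfl
    rw [norm_sq_eq_sum]
    have h1 : (inner ℝ ((MeasurableEquiv.toLp 2 (Fin d → ℝ)).symm.symm x) v0 : ℝ) = x i0 := by
      rw [hv0def, EuclideanSpace.inner_single_right]
      simp [hz]
    rw [h1, Finset.mul_sum, Real.exp_sum]
    have h2 : ∀ i, (if i = i0 then |x i| * Real.exp (-π * x i ^ 2) else Real.exp (-π * x i ^ 2))
        = (if i = i0 then |x i| else 1) * Real.exp (-π * x i ^ 2) := by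
      intro i; split <;> simp
    simp only [h2, hz]
    rw [Finset.prod_mul_distrib, Finset.prod_ite_eq' Finset.univ i0 (fun i => |x i|)]
    simp
  simp only [Function.comp_def, hre]
  rw [volume_pi, MeasureTheory.integral_fintype_prod_eq_prod (ι := Fin d)
    (f := fun i t => if i = i0 then |t| * Real.exp (-π * t ^ 2) else Real.exp (-π * t ^ 2))]
  have : ∀ i : Fin d, (∫ t : ℝ, if i = i0 then |t| * Real.exp (-π * t ^ 2)
      else Real.exp (-π * t ^ 2)) = if i = i0 then 1/π else 1 := by
    intro i; split
    · exact gauss2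
    · exact gauss1
  simp only [this]
  rw [Finset.prod_ite_eq' Finset.univ i0 (fun _ => (1:ℝ)/π)]
  simp

-- change of variables under an isometry, for σ
lemma sigma_comp_isometry (hσ : IsUniformSphereMeasure σ) {F : Type*} [NormedAddCommGroup F] [NormedSpace ℝ F]
    (f : E ≃ₗᵢ[ℝ] E) {g : E → F} (hg : AEStronglyMeasurable g σ) :
    ∫ v, g v ∂σ = ∫ v, g (f v) ∂σ := by
  conv_lhs => rw [← hσ.2.2 f]
  exact integral_map f.continuous.measurable.aemeasurable ((hσ.2.2 f).symm ▸ hg)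

-- bounded a.e.-measurable functions are integrable w.r.t. σ
lemma sigma_integrable (hσ : IsUniformSphereMeasure σ) {F : Type*} [NormedAddCommGroup F]
    {g : E → F} (hg : AEStronglyMeasurable g σ) (C : ℝ)
    (hb : ∀ v : E, ‖v‖ = 1 → ‖g v‖ ≤ C) : Integrable g σ := by
  haveI := hσ.1
  refine Integrable.mono' (integrable_const C) hg ?_
  filter_upwards [hσ.2.1] with v hv using hb v hv

lemma sigma_inner_abs (hσ : IsUniformSphereMeasure σ) (e : E) (he : ‖e‖ = 1) (z : E) :
    ∫ v, |(inner ℝ z v : ℝ)| ∂σ = ‖z‖ * ∫ v, |(inner ℝ v e : ℝ)| ∂σ := by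
  have hmeas : ∀ w : E, AEStronglyMeasurable (fun v : E => |(inner ℝ v w : ℝ)|) σ :=
    fun w => (Continuous.abs (continuous_inner.comp
      (continuous_id.prodMk continuous_const))).aestronglyMeasurable
  rcases eq_or_ne z 0 with rfl | hz
  · simp
  · set e' : E := ‖z‖⁻¹ • z with he'def
    have hz0 : (0:ℝ) < ‖z‖ := norm_pos_iff.mpr hz
    have he' : ‖e'‖ = 1 := by
      rw [he'def, norm_smul, norm_inv, norm_norm, inv_mul_cancel₀ hz0.ne']
    have hzz : z = ‖z‖ • e' := by
      rw [he'def, smul_smul, mul_inv_cancel₀ hz0.ne', one_smul]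
    have h1 : ∀ v : E, |(inner ℝ z v : ℝ)| = ‖z‖ * |(inner ℝ e' v : ℝ)| := by
      intro v
      conv_lhs => rw [hzz]
      rw [real_inner_smul_left, abs_mul, abs_of_nonneg hz0.le]
    simp only [h1]
    rw [integral_const_mul]
    congr 1
    -- ∫ |⟪e', v⟫| dσ = ∫ |⟪v, e⟫| dσ
    set f := Submodule.reflection (Submodule.span ℝ {e - e'})ᗮ with hfdef
    have hfe : f e = e' := Submodule.reflection_sub (by rw [he, he'])
    rw [sigma_comp_isometry hσ f (g := fun v => |(inner ℝ e' v : ℝ)|)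
      ((Continuous.abs (continuous_inner.comp
        (continuous_const.prodMk continuous_id))).aestronglyMeasurable)]
    congr 1; funext v
    rw [← hfe, LinearIsometryEquiv.inner_map_map, real_inner_comm]


lemma meas_sgn_inner (e : E) : Measurable fun v : E => sgn (inner ℝ v e : ℝ) :=
  measurable_sgn.comp (Continuous.measurable
    (continuous_inner.comp (continuous_id.prodMk continuous_const)))

lemma refl_zero (hσ : IsUniformSphereMeasure σ) (e p : E) (hpe : (inner ℝ p e : ℝ) = 0) :
    ∫ v, sgn (inner ℝ v e : ℝ) * (inner ℝ p v : ℝ) ∂σ = 0 := by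
  rcases eq_or_ne p 0 with rfl | hp
  · simp
  · set f := Submodule.reflection (Submodule.span ℝ {p})ᗮ with hfdef
    have hfp : f p = -p := Submodule.reflection_orthogonalComplement_singleton_eq_neg p
    have hfe : f e = e := by
      apply Submodule.reflection_mem_subspace_eq_self
      rw [Submodule.mem_orthogonal]
      intro u hu
      rcases Submodule.mem_span_singleton.mp hu with ⟨c, rfl⟩
      rw [real_inner_smul_left, hpe, mul_zero]
    have hmg : AEStronglyMeasurable (fun v : E => sgn (inner ℝ v e : ℝ) * (inner ℝ p v : ℝ)) σ :=
      ((meas_sgn_inner e).mul (Continuous.measurable (continuous_inner.comp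
        (continuous_const.prodMk continuous_id)))).aestronglyMeasurable
    have h := sigma_comp_isometry hσ f hmg
    have hneg : ∀ v : E, sgn (inner ℝ (f v) e : ℝ) * (inner ℝ p (f v) : ℝ)
        = -(sgn (inner ℝ v e : ℝ) * (inner ℝ p v : ℝ)) := by
      intro v
      have h1 : (inner ℝ (f v) e : ℝ) = inner ℝ v e := by
        conv_lhs => rw [← hfe]
        rw [LinearIsometryEquiv.inner_map_map]
      have h2 : (inner ℝ p (f v) : ℝ) = -(inner ℝ p v : ℝ) := by
        have : p = -(f p) := by rw [hfp, neg_neg]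
        conv_lhs => rw [this]
        rw [inner_neg_left, LinearIsometryEquiv.inner_map_map]
      rw [h1, h2]; ring
    simp only [hneg] at h
    rw [integral_neg] at h
    linarith

lemma T_neg (hσ : IsUniformSphereMeasure σ) (e : E) :
    ∫ v, sgn (-(inner ℝ v e : ℝ)) • v ∂σ = -∫ v, sgn (inner ℝ v e : ℝ) • v ∂σ := by
  have hmg : AEStronglyMeasurable (fun v : E => sgn (-(inner ℝ v e : ℝ)) • v) σ :=
    ((measurable_sgn.comp (Continuous.measurable (Continuous.neg
      (continuous_inner.comp (continuous_id.prodMk continuous_const))))).smul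
      measurable_id).aestronglyMeasurable
  have h := sigma_comp_isometry hσ (LinearIsometryEquiv.neg ℝ : EuclideanSpace ℝ (Fin d) ≃ₗᵢ[ℝ] EuclideanSpace ℝ (Fin d)) hmg
  have hneg : ∀ v : E, sgn (-(inner ℝ ((LinearIsometryEquiv.neg ℝ : EuclideanSpace ℝ (Fin d) ≃ₗᵢ[ℝ] EuclideanSpace ℝ (Fin d)) v) e : ℝ))
      • ((LinearIsometryEquiv.neg ℝ : EuclideanSpace ℝ (Fin d) ≃ₗᵢ[ℝ] EuclideanSpace ℝ (Fin d)) v) = -(sgn (inner ℝ v e : ℝ) • v) := by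
    intro v
    have : ((LinearIsometryEquiv.neg ℝ : EuclideanSpace ℝ (Fin d) ≃ₗᵢ[ℝ] EuclideanSpace ℝ (Fin d)) v) = -v := rfl
    rw [this, inner_neg_left, neg_neg, smul_neg]
  simp only [hneg] at h
  rw [integral_neg] at h
  exact h

lemma integrable_sgn_smul (hσ : IsUniformSphereMeasure σ) (e : E) :
    Integrable (fun v : E => sgn (inner ℝ v e : ℝ) • v) σ := by
  refine sigma_integrable hσ ((meas_sgn_inner e).smul measurable_id).aestronglyMeasurable 1 ?_
  intro v hv
  rw [norm_smul, hv, mul_one, Real.norm_eq_abs]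
  unfold sgn; split <;> norm_num

lemma T_eq (hσ : IsUniformSphereMeasure σ) (e : E) (he : ‖e‖ = 1) :
    ∫ v, sgn (inner ℝ v e : ℝ) • v ∂σ = (∫ v, |(inner ℝ v e : ℝ)| ∂σ) • e := by
  apply ext_inner_right ℝ
  intro w
  rw [real_inner_smul_left]
  have hswap : (inner ℝ (∫ v, sgn (inner ℝ v e : ℝ) • v ∂σ) w : ℝ)
      = ∫ v, sgn (inner ℝ v e : ℝ) * (inner ℝ w v : ℝ) ∂σ := by
    rw [real_inner_comm, ← integral_inner (integrable_sgn_smul hσ e) w]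
    congr 1; funext v
    rw [real_inner_smul_right]
  rw [hswap]
  set c : ℝ := inner ℝ w e with hc
  set p : E := w - c • e with hpdef
  have hpe : (inner ℝ p e : ℝ) = 0 := by
    rw [hpdef, inner_sub_left, real_inner_smul_left, real_inner_self_eq_norm_sq, he]
    norm_num [hc]
  have hwv : ∀ v : E, (inner ℝ w v : ℝ) = c * (inner ℝ v e : ℝ) + (inner ℝ p v : ℝ) := by
    intro v
    rw [hpdef, inner_sub_left, real_inner_smul_left]
    rw [real_inner_comm e v]
    ring
  have hsplit : ∀ v : E, sgn (inner ℝ v e : ℝ) * (inner ℝ w v : ℝ)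
      = c * |(inner ℝ v e : ℝ)| + sgn (inner ℝ v e : ℝ) * (inner ℝ p v : ℝ) := by
    intro v
    rw [hwv v, ← sgn_mul_self (inner ℝ v e : ℝ)]
    ring
  simp only [hsplit]
  have hi1 : Integrable (fun v : E => c * |(inner ℝ v e : ℝ)|) σ := by
    refine sigma_integrable hσ ?_ (|c| * (‖e‖ + 1)) ?_
    · exact (measurable_const.mul (Continuous.measurable (Continuous.abs
        (continuous_inner.comp (continuous_id.prodMk continuous_const))))).aestronglyMeasurable
    · intro v hv
      rw [Real.norm_eq_abs, abs_mul, abs_abs]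
      have := abs_real_inner_le_norm v e
      have h0 : |c| * |(inner ℝ v e : ℝ)| ≤ |c| * (‖v‖ * ‖e‖) :=
        mul_le_mul_of_nonneg_left this (abs_nonneg c)
      rw [hv, one_mul] at h0
      nlinarith [abs_nonneg c, norm_nonneg e]
  have hi2 : Integrable (fun v : E => sgn (inner ℝ v e : ℝ) * (inner ℝ p v : ℝ)) σ := by
    refine sigma_integrable hσ ?_ ‖p‖ ?_
    · exact ((meas_sgn_inner e).mul (Continuous.measurable (continuous_inner.comp
        (continuous_const.prodMk continuous_id)))).aestronglyMeasurable
    · intro v hv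
      rw [Real.norm_eq_abs, abs_mul]
      have h1 : |sgn (inner ℝ v e : ℝ)| = 1 := by unfold sgn; split <;> norm_num
      rw [h1, one_mul]
      have := abs_real_inner_le_norm p v
      rw [hv, mul_one] at this
      exact this
  rw [integral_add hi1 hi2, refl_zero hσ e p hpe, integral_const_mul, add_zero]
  rw [hc, real_inner_comm w e]
  ring

lemma K_val (hd : 1 ≤ d) (hσ : IsUniformSphereMeasure σ) (e : E) (he : ‖e‖ = 1) :
    (∫ v, |(inner ℝ v e : ℝ)| ∂σ)
        * ((d:ℝ) * Real.Gamma (((d:ℝ) + 1) / 2) / (2 * √π * Real.Gamma ((d:ℝ) / 2 + 1)))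
      = 1 / π := by
  haveI := hσ.1
  set P : EuclideanSpace ℝ (Fin d) → EuclideanSpace ℝ (Fin d) → ℝ :=
    fun z v => |(inner ℝ z v : ℝ)| * Real.exp (-π * ‖z‖ ^ 2) with hPdef
  have hc : Continuous (Function.uncurry P) := by
    exact (continuous_inner.abs).mul
      (((continuous_const.mul ((continuous_fst.norm).pow 2))).rexp)
  have hslice : ∀ z : EuclideanSpace ℝ (Fin d), Integrable (fun v => P z v) σ := by
    intro z
    refine sigma_integrable hσ ?_ (‖z‖ * Real.exp (-π * ‖z‖ ^ 2)) ?_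
    · exact ((Continuous.abs (continuous_inner.comp
        (continuous_const.prodMk continuous_id))).mul continuous_const).aestronglyMeasurable
    · intro v hv
      rw [Real.norm_eq_abs, hPdef]
      have h1 : |(inner ℝ z v : ℝ)| ≤ ‖z‖ := by
        have := abs_real_inner_le_norm z v
        rwa [hv, mul_one] at this
      have h2 : (0:ℝ) < Real.exp (-π * ‖z‖ ^ 2) := Real.exp_pos _
      rw [abs_mul, abs_abs, abs_of_pos h2]
      exact mul_le_mul_of_nonneg_right h1 h2.le
  have hP : Integrable (Function.uncurry P) (volume.prod σ) := by
    refine (integrable_prod_iff hc.aestronglyMeasurable).mpr ⟨?_, ?_⟩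
    · exact Filter.Eventually.of_forall fun z => hslice z
    · refine Integrable.mono' integrable_norm_gauss
        (hc.aestronglyMeasurable.norm.integral_prod_right') ?_
      refine Filter.Eventually.of_forall fun z => ?_
      have h0 : 0 ≤ ∫ y, ‖Function.uncurry P (z, y)‖ ∂σ := integral_nonneg fun v => norm_nonneg _
      rw [Real.norm_eq_abs, abs_of_nonneg h0]
      calc ∫ y, ‖Function.uncurry P (z, y)‖ ∂σ ≤ ∫ _v, ‖z‖ * Real.exp (-π * ‖z‖ ^ 2) ∂σ := by
            refine integral_mono_ae (hslice z).norm (integrable_const _) ?_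
            filter_upwards [hσ.2.1] with v hv
            have h1 : |(inner ℝ z v : ℝ)| ≤ ‖z‖ := by
              have := abs_real_inner_le_norm z v
              rwa [hv, mul_one] at this
            have h2 : (0:ℝ) < Real.exp (-π * ‖z‖ ^ 2) := Real.exp_pos _
            show |Function.uncurry P (z, v)| ≤ _
            rw [Function.uncurry_apply_pair, hPdef]
            simp only []
            rw [abs_mul, abs_abs, abs_of_pos h2]
            exact mul_le_mul_of_nonneg_right h1 h2.le
        _ = ‖z‖ * Real.exp (-π * ‖z‖ ^ 2) := by
            rw [integral_const, probReal_univ]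
            simp
  have hswap := integral_integral_swap hP
  -- LHS
  have hL : ∫ z, ∫ v, P z v ∂σ = (∫ v, |(inner ℝ v e : ℝ)| ∂σ)
      * ∫ z : EuclideanSpace ℝ (Fin d), ‖z‖ * Real.exp (-π * ‖z‖ ^ 2) := by
    have h1 : ∀ z : EuclideanSpace ℝ (Fin d), ∫ v, P z v ∂σ
        = (∫ v, |(inner ℝ v e : ℝ)| ∂σ) * (‖z‖ * Real.exp (-π * ‖z‖ ^ 2)) := by
      intro z
      rw [hPdef]
      rw [integral_mul_const, sigma_inner_abs hσ e he z]
      ring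
    rw [funext h1, integral_const_mul]
  -- RHS
  have hR : ∫ v, ∫ z, P z v ∂volume ∂σ = 1 / π := by
    have h1 : ∀ᵐ v ∂σ, ∫ z, P z v ∂volume = 1 / π := by
      filter_upwards [hσ.2.1] with v hv
      exact integral_inner_gauss hd v hv
    rw [integral_congr_ae h1, integral_const, probReal_univ]
    simp
  rw [hL, integral_norm_gauss_val hd] at hswap
  rw [hswap] at *
  rw [hR]


end DJWAux

open Real Set in
/-- the DJW18 randomizer is unbiased: for every `x` with `‖x‖₂ ≤ L`,
`E[R(x)] = x`. -/
theorem djw18_unbiased (d : ℕ) (hd : 1 ≤ d) (L ε₀ : ℝ) (hL : 0 < L) (hε₀ : 0 < ε₀)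
    (u : EuclideanSpace ℝ (Fin d)) (hu : ‖u‖ = 1)
    (σ : Measure (EuclideanSpace ℝ (Fin d))) (hσ : IsUniformSphereMeasure σ)
    (x : EuclideanSpace ℝ (Fin d)) (hx : ‖x‖ ≤ L) :
    ∫ y, y ∂(djw18 d L ε₀ u σ x) = x := by
  haveI := hσ.1
  classical
  set e : EuclideanSpace ℝ (Fin d) := unitDir u x with hedef
  have he : ‖e‖ = 1 := by
    rw [hedef, unitDir]
    split_ifs with h
    · exact hu
    · rw [norm_smul, norm_inv, norm_norm, inv_mul_cancel₀ (norm_ne_zero_iff.mpr h)]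
  set M : ℝ := djwM d L ε₀ with hMdef
  set pU : ℝ := Real.exp ε₀ / (Real.exp ε₀ + 1) with hpUdef
  set pS : ℝ := 1 / 2 + ‖x‖ / (2 * L) with hpSdef
  set out : ℝ → ℝ → EuclideanSpace ℝ (Fin d) → EuclideanSpace ℝ (Fin d) :=
    fun s c v => (c * M * sgn (s * (inner ℝ v e : ℝ))) • v with houtdef
  have hexp : djw18 d L ε₀ u σ x = ENNReal.ofReal pS •
      (ENNReal.ofReal pU • σ.map (out 1 1) + ENNReal.ofReal (1 - pU) • σ.map (out 1 (-1))) +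
    ENNReal.ofReal (1 - pS) •
      (ENNReal.ofReal pU • σ.map (out (-1) 1) +
        ENNReal.ofReal (1 - pU) • σ.map (out (-1) (-1))) := rfl
  -- basic positivity facts
  have hexp1 : (1:ℝ) < Real.exp ε₀ := by
    have := Real.exp_lt_exp.mpr hε₀
    rwa [Real.exp_zero] at this
  have hpU0 : 0 ≤ pU := by positivity
  have hpU1 : pU ≤ 1 := by
    rw [hpUdef, div_le_one (by positivity)]; linarith
  have hpS0 : 0 ≤ pS := by positivity
  have hpS1 : pS ≤ 1 := by
    have h1 : ‖x‖ / (2 * L) ≤ 1 / 2 := by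
      rw [div_le_iff₀ (by positivity)]; linarith
    rw [hpSdef]; linarith
  -- measurability & integrability of the four `out` maps
  have hout_meas : ∀ s c : ℝ, Measurable (out s c) := by
    intro s c
    exact (measurable_const.mul (measurable_sgn.comp
      ((measurable_const.mul (Continuous.measurable (continuous_inner.comp
        (continuous_id.prodMk continuous_const))))))).smul measurable_id
  have hout_int : ∀ s c : ℝ, |c| = 1 → Integrable (out s c) σ := by
    intro s c hc
    refine sigma_integrable hσ (hout_meas s c).aestronglyMeasurable |M| ?_
    intro v hv
    rw [houtdef]
    simp only []
    rw [norm_smul, hv, mul_one, Real.norm_eq_abs, abs_mul, abs_mul, hc, one_mul]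
    have : |sgn (s * (inner ℝ v e : ℝ))| = 1 := by unfold sgn; split <;> norm_num
    rw [this, mul_one]
  have hid_int : ∀ s c : ℝ, |c| = 1 → Integrable (fun y => y) (σ.map (out s c)) := by
    intro s c hc
    exact (integrable_map_measure aestronglyMeasurable_id
      (hout_meas s c).aemeasurable).mpr (hout_int s c hc)
  have hmap : ∀ s c : ℝ, ∫ y, y ∂(σ.map (out s c)) = ∫ v, out s c v ∂σ := by
    intro s c
    exact integral_map (hout_meas s c).aemeasurable aestronglyMeasurable_id
  -- expand the integral over the mixture
  have hne : ∀ r : ℝ, ENNReal.ofReal r ≠ ⊤ := fun r => ENNReal.ofReal_ne_top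
  rw [hexp, integral_add_measure
      (((hid_int 1 1 (by norm_num)).smul_measure (hne pU)).add_measure
        ((hid_int 1 (-1) (by norm_num)).smul_measure (hne (1-pU)))|>.smul_measure (hne pS))
      (((hid_int (-1) 1 (by norm_num)).smul_measure (hne pU)).add_measure
        ((hid_int (-1) (-1) (by norm_num)).smul_measure (hne (1-pU)))|>.smul_measure (hne (1-pS))),
    integral_smul_measure, integral_smul_measure,
    integral_add_measure ((hid_int 1 1 (by norm_num)).smul_measure (hne pU))
      ((hid_int 1 (-1) (by norm_num)).smul_measure (hne (1-pU))),
    integral_add_measure ((hid_int (-1) 1 (by norm_num)).smul_measure (hne pU))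
      ((hid_int (-1) (-1) (by norm_num)).smul_measure (hne (1-pU))),
    integral_smul_measure, integral_smul_measure, integral_smul_measure, integral_smul_measure,
    hmap, hmap, hmap, hmap,
    ENNReal.toReal_ofReal hpS0, ENNReal.toReal_ofReal (by linarith : (0:ℝ) ≤ 1 - pS),
    ENNReal.toReal_ofReal hpU0, ENNReal.toReal_ofReal (by linarith : (0:ℝ) ≤ 1 - pU)]
  -- compute the four integrals
  set T : EuclideanSpace ℝ (Fin d) := ∫ v, sgn ((inner ℝ v e : ℝ)) • v ∂σ with hTdef
  set K : ℝ := ∫ v, |(inner ℝ v e : ℝ)| ∂σ with hKdef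
  have hT : T = K • e := T_eq hσ e he
  have hsgn_int : Integrable (fun v : EuclideanSpace ℝ (Fin d) =>
        sgn ((inner ℝ v e : ℝ)) • v) σ := by
    refine sigma_integrable hσ ((measurable_sgn.comp (Continuous.measurable
      (continuous_inner.comp (continuous_id.prodMk continuous_const)))).smul
        measurable_id).aestronglyMeasurable 1 ?_
    intro v hv
    rw [norm_smul, hv, mul_one, Real.norm_eq_abs]
    unfold sgn; split <;> norm_num
  have hI : ∀ c : ℝ, ∫ v, out 1 c v ∂σ = (c * M) • T := by
    intro c
    rw [houtdef]
    simp only [one_mul]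
    calc ∫ v, (c * M * sgn ((inner ℝ v e : ℝ))) • v ∂σ
        = ∫ v, (c * M) • (sgn ((inner ℝ v e : ℝ)) • v) ∂σ := by
          congr 1; funext v; rw [mul_smul]
      _ = (c * M) • T := by rw [integral_smul, hTdef]
  have hI' : ∀ c : ℝ, ∫ v, out (-1) c v ∂σ = -((c * M) • T) := by
    intro c
    rw [houtdef]
    simp only [neg_one_mul]
    calc ∫ v, (c * M * sgn (-(inner ℝ v e : ℝ))) • v ∂σ
        = ∫ v, (c * M) • (sgn (-(inner ℝ v e : ℝ)) • v) ∂σ := by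
          congr 1; funext v; rw [mul_smul]
      _ = (c * M) • ∫ v, sgn (-(inner ℝ v e : ℝ)) • v ∂σ := integral_smul _ _
      _ = -((c * M) • T) := by rw [T_neg hσ e, smul_neg, hTdef]
  rw [hI 1, hI (-1), hI' 1, hI' (-1)]
  -- combine into a single scalar multiple of e
  have hcomb : pS • (pU • ((1 * M) • T) + (1 - pU) • ((-1 * M) • T)) +
      (1 - pS) • (pU • -((1 * M) • T) + (1 - pU) • -((-1 * M) • T))
      = ((pS * (pU * M - (1 - pU) * M) + (1 - pS) * ((1 - pU) * M - pU * M)) * K) • e := by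
    rw [hT]
    module
  rw [hcomb]
  -- the scalar equals ‖x‖
  have hKval := K_val hd hσ e he
  have hscalar : (pS * (pU * M - (1 - pU) * M) + (1 - pS) * ((1 - pU) * M - pU * M)) * K
      = ‖x‖ := by
    have hG1 : 0 < Real.Gamma (((d:ℝ) + 1) / 2) := Real.Gamma_pos_of_pos (by positivity)
    have hG2 : 0 < Real.Gamma ((d:ℝ) / 2 + 1) := Real.Gamma_pos_of_pos (by positivity)
    have hd0 : (0:ℝ) < d := by exact_mod_cast hd
    have hsπ : (0:ℝ) < √π := Real.sqrt_pos.mpr pi_pos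
    have hsq : √π * √π = π := Real.mul_self_sqrt pi_pos.le
    have h2pS : pS * (pU * M - (1 - pU) * M) + (1 - pS) * ((1 - pU) * M - pU * M)
        = (2 * pS - 1) * (2 * pU - 1) * M := by ring
    have hπ0 : (π:ℝ) ≠ 0 := pi_ne_zero
    have hsπ0 : √π ≠ 0 := ne_of_gt hsπ
    have hG10 : Real.Gamma (((d:ℝ) + 1) / 2) ≠ 0 := ne_of_gt hG1
    have hG20 : Real.Gamma ((d:ℝ) / 2 + 1) ≠ 0 := ne_of_gt hG2
    have hd0' : (d:ℝ) ≠ 0 := ne_of_gt hd0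
    have hL0 : L ≠ 0 := ne_of_gt hL
    have hE10 : Real.exp ε₀ - 1 ≠ 0 := by linarith
    have hE20 : Real.exp ε₀ + 1 ≠ 0 := by linarith
    have hKeq : K = 2 * √π * Real.Gamma ((d:ℝ) / 2 + 1)
        / (π * (d:ℝ) * Real.Gamma (((d:ℝ) + 1) / 2)) := by
      rw [eq_div_iff (by positivity)]
      have h := hKval
      rw [← hKdef, ← mul_div_assoc,
        div_eq_div_iff (by positivity) (by positivity)] at h
      linear_combination h
    have hA : 2 * pS - 1 = ‖x‖ / L := by
      rw [hpSdef]; field_simp; ring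
    have hB : 2 * pU - 1 = (Real.exp ε₀ - 1) / (Real.exp ε₀ + 1) := by
      rw [hpUdef]; field_simp; ring
    rw [h2pS, hA, hB, hKeq, hMdef, djwM]
    field_simp
    linear_combination (‖x‖) * hsq
  rw [hscalar, hedef, unitDir]
  split_ifs with h
  · simp [h]
  · rw [smul_smul, mul_inv_cancel₀ (norm_ne_zero_iff.mpr h), one_smul]
end

section
/- Let P and Q be probability measures on a measurable space, let ε ≥ 0, δ ≥ 0, γ ∈ [0,1], and suppose P(S) ≤ e^{ε}·Q(S) + δ for every measurable set S. Then the subsampled (mixture) measure P′ = γ·P + (1−γ)·Q satisfies P′(S) ≤ e^{ε′}·Q(S) + γ·δ for every measurable set S, where ε′ = log(1 + γ·(e^{ε} − 1)). -/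
open MeasureTheory

/-- privacy amplification by subsampling, at the level of measures.
If `P(S) ≤ e^ε·Q(S) + δ` for every measurable `S`, then the mixture
`P' = γ·P + (1−γ)·Q` satisfies `P'(S) ≤ e^{ε'}·Q(S) + γ·δ` for every measurable `S`,
where `ε' = log(1 + γ·(e^ε − 1))`. -/
theorem subsampling_amplification {α : Type*} [MeasurableSpace α]
    (P Q : Measure α) [IsProbabilityMeasure P] [IsProbabilityMeasure Q]
    (ε δ γ : ℝ) (hε : 0 ≤ ε) (hδ : 0 ≤ δ) (hγ0 : 0 ≤ γ) (hγ1 : γ ≤ 1)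
    (h : ∀ S : Set α, MeasurableSet S →
      P S ≤ ENNReal.ofReal (Real.exp ε) * Q S + ENNReal.ofReal δ) :
    ∀ S : Set α, MeasurableSet S →
      (ENNReal.ofReal γ • P + ENNReal.ofReal (1 - γ) • Q) S ≤
        ENNReal.ofReal (Real.exp (Real.log (1 + γ * (Real.exp ε - 1)))) * Q S +
          ENNReal.ofReal (γ * δ) := by
  intro S hS
  have hexp1 : (1:ℝ) ≤ Real.exp ε := by
    simpa using Real.exp_le_exp.2 hε
  have hpos : 0 < 1 + γ * (Real.exp ε - 1) := by nlinarith
  rw [Real.exp_log hpos]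
  simp only [Measure.add_apply, Measure.smul_apply, smul_eq_mul]
  have h1 : ENNReal.ofReal γ * P S ≤
      ENNReal.ofReal (γ * Real.exp ε) * Q S + ENNReal.ofReal (γ * δ) := by
    calc ENNReal.ofReal γ * P S
        ≤ ENNReal.ofReal γ * (ENNReal.ofReal (Real.exp ε) * Q S + ENNReal.ofReal δ) :=
          mul_le_mul_right (h S hS) _
      _ = ENNReal.ofReal (γ * Real.exp ε) * Q S + ENNReal.ofReal (γ * δ) := by
          rw [mul_add, ← mul_assoc, ← ENNReal.ofReal_mul hγ0, ← ENNReal.ofReal_mul hγ0]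
  calc ENNReal.ofReal γ * P S + ENNReal.ofReal (1 - γ) * Q S
      ≤ ENNReal.ofReal (γ * Real.exp ε) * Q S + ENNReal.ofReal (γ * δ)
        + ENNReal.ofReal (1 - γ) * Q S := add_le_add_left h1 _
    _ = (ENNReal.ofReal (γ * Real.exp ε) + ENNReal.ofReal (1 - γ)) * Q S
        + ENNReal.ofReal (γ * δ) := by ring
    _ = ENNReal.ofReal (1 + γ * (Real.exp ε - 1)) * Q S + ENNReal.ofReal (γ * δ) := by
        rw [← ENNReal.ofReal_add (by positivity) (by linarith)]
        ring_nf
end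

section
/- Let P and Q be probability measures on a measurable space such that P(S) ≤ e^{ε}·Q(S) and Q(S) ≤ e^{ε}·P(S) for every measurable set S (i.e., the pair is pure ε-DP indistinguishable), with ε ≥ 0. Then for every λ > 1, the λ-Rényi divergence satisfies D_λ(P‖Q) ≤ λ·ε²/2. -/
open MeasureTheory
open scoped ENNReal
open Real in
lemma my_sinh_le_mul_cosh {t : ℝ} (ht : 0 ≤ t) : Real.sinh t ≤ t * Real.cosh t := by
  have hmono : MonotoneOn (fun t : ℝ => t * Real.cosh t - Real.sinh t) (Set.Ici 0) := by
    have hd : ∀ t : ℝ, HasDerivAt (fun t : ℝ => t * Real.cosh t - Real.sinh t)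
        (t * Real.sinh t) t := by
      intro t
      have h1 := ((hasDerivAt_id t).mul (Real.hasDerivAt_cosh t)).sub (Real.hasDerivAt_sinh t)
      exact h1.congr_deriv (by simp [id])
    apply monotoneOn_of_deriv_nonneg (convex_Ici 0)
    · exact ((continuous_id.mul Real.continuous_cosh).sub Real.continuous_sinh).continuousOn
    · intro x _
      exact (hd x).differentiableAt.differentiableWithinAt
    · intro x hx
      rw [(hd x).deriv]
      have hx' : 0 < x := by simpa using hx
      exact mul_nonneg hx'.le (Real.sinh_nonneg_iff.mpr hx'.le)
  have := hmono (Set.self_mem_Ici) (Set.mem_Ici.mpr ht) ht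
  simpa using this

open Real in
lemma my_cosh_le {x y : ℝ} (hy : 0 ≤ y) (hxy : y ≤ x) :
    Real.cosh x ≤ Real.cosh y * Real.exp ((x ^ 2 - y ^ 2) / 2) := by
  have hmono : MonotoneOn (fun t : ℝ => t ^ 2 / 2 - Real.log (Real.cosh t)) (Set.Ici 0) := by
    have hd : ∀ t : ℝ, HasDerivAt (fun t : ℝ => t ^ 2 / 2 - Real.log (Real.cosh t))
        (t - Real.sinh t / Real.cosh t) t := by
      intro t
      have h1 : HasDerivAt (fun t : ℝ => t ^ 2 / 2) t t := by
        simpa using ((hasDerivAt_pow 2 t).div_const 2).congr_deriv (by ring)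
      exact h1.sub ((Real.hasDerivAt_cosh t).log (Real.cosh_pos t).ne')
    apply monotoneOn_of_deriv_nonneg (convex_Ici 0)
    · exact (((continuous_pow 2).div_const 2).sub (Real.continuous_cosh.log (fun x => (Real.cosh_pos x).ne'))).continuousOn
    · intro x _
      exact (hd x).differentiableAt.differentiableWithinAt
    · intro x hx
      rw [(hd x).deriv]
      have hx' : 0 < x := by simpa using hx
      rw [sub_nonneg, div_le_iff₀ (Real.cosh_pos x)]
      exact my_sinh_le_mul_cosh hx'.le
  have h := hmono (Set.mem_Ici.mpr hy) (Set.mem_Ici.mpr (hy.trans hxy)) hxy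
  have hlog : Real.log (Real.cosh x) ≤ Real.log (Real.cosh y) + (x ^ 2 - y ^ 2) / 2 := by
    simp only at h; linarith
  calc Real.cosh x = Real.exp (Real.log (Real.cosh x)) := (Real.exp_log (Real.cosh_pos x)).symm
    _ ≤ Real.exp (Real.log (Real.cosh y) + (x ^ 2 - y ^ 2) / 2) := Real.exp_le_exp.mpr hlog
    _ = Real.cosh y * Real.exp ((x ^ 2 - y ^ 2) / 2) := by
        rw [Real.exp_add, Real.exp_log (Real.cosh_pos y)]

lemma my_key_scalar (ε l : ℝ) (hε : 0 ≤ ε) (hl : 1 < l) :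
    (Real.exp ε - 1) * Real.exp (-ε) ^ l + (1 - Real.exp (-ε)) * Real.exp ε ^ l
      ≤ (Real.exp ε - Real.exp (-ε)) * Real.exp (l * (l - 1) * ε ^ 2 / 2) := by
  set u := Real.exp (ε / 2) with hu
  set v := Real.exp (-(ε / 2)) with hv
  set w := Real.exp ((2 * l - 1) * ε / 2) with hw
  set z := Real.exp (-((2 * l - 1) * ε / 2)) with hz
  set E := Real.exp (l * (l - 1) * ε ^ 2 / 2) with hE
  have hcosh := my_cosh_le (y := ε / 2) (x := (2 * l - 1) * ε / 2)
    (by positivity) (by nlinarith)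
  rw [Real.cosh_eq, Real.cosh_eq] at hcosh
  have hexparg : (((2 * l - 1) * ε / 2) ^ 2 - (ε / 2) ^ 2) / 2 = l * (l - 1) * ε ^ 2 / 2 := by
    ring
  rw [hexparg] at hcosh
  have huv : 0 ≤ u - v := sub_nonneg.mpr (Real.exp_le_exp.mpr (by linarith))
  have hwz : w + z ≤ (u + v) * E := by
    rw [div_le_iff₀ (by norm_num : (0:ℝ) < 2)] at hcosh
    calc w + z = (Real.exp ((2*l-1)*ε/2) + Real.exp (-((2*l-1)*ε/2))) := rfl
      _ ≤ (Real.exp (ε/2) + Real.exp (-(ε/2))) / 2 * E * 2 := hcosh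
      _ = (u + v) * E := by ring
  have h1 : Real.exp ε * Real.exp (-ε * l) = u * z := by
    rw [hu, hz, ← Real.exp_add, ← Real.exp_add]; congr 1; ring
  have h2 : Real.exp (-ε) * Real.exp (ε * l) = v * w := by
    rw [hv, hw, ← Real.exp_add, ← Real.exp_add]; congr 1; ring
  have h3 : Real.exp (-ε * l) = v * z := by
    rw [hv, hz, ← Real.exp_add]; congr 1; ring
  have h4 : Real.exp (ε * l) = u * w := by
    rw [hu, hw, ← Real.exp_add]; congr 1; ring
  have h5 : Real.exp ε = u * u := by rw [hu, ← Real.exp_add]; congr 1; ring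
  have h6 : Real.exp (-ε) = v * v := by rw [hv, ← Real.exp_add]; congr 1; ring
  have e1 : (Real.exp ε - 1) * Real.exp (-ε * l) + (1 - Real.exp (-ε)) * Real.exp (ε * l)
      = (u - v) * (w + z) := by linear_combination h1 - h2 - h3 + h4
  have e2 : Real.exp ε - Real.exp (-ε) = (u - v) * (u + v) := by linear_combination h5 - h6
  rw [← Real.exp_mul, ← Real.exp_mul, e1, e2]
  calc (u - v) * (w + z) ≤ (u - v) * ((u + v) * E) := mul_le_mul_of_nonneg_left hwz huv
    _ = (u - v) * (u + v) * E := by ring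

lemma my_chord {a b t l : ℝ} (ha : 0 ≤ a) (hab : a < b) (hta : a ≤ t) (htb : t ≤ b)
    (hl : 1 ≤ l) :
    t ^ l ≤ ((b - t) * a ^ l + (t - a) * b ^ l) / (b - a) := by
  have hba : 0 < b - a := by linarith
  have h := (convexOn_rpow hl).2 (Set.mem_Ici.mpr ha)
    (Set.mem_Ici.mpr (ha.trans hab.le))
    (show 0 ≤ (b - t) / (b - a) from div_nonneg (by linarith) hba.le)
    (show 0 ≤ (t - a) / (b - a) from div_nonneg (by linarith) hba.le)
    (by field_simp; ring)
  rw [smul_eq_mul, smul_eq_mul] at h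
  have harg : (b - t) / (b - a) * a + (t - a) / (b - a) * b = t := by
    field_simp; ring
  rw [harg] at h
  calc t ^ l ≤ (b - t) / (b - a) * a ^ l + (t - a) / (b - a) * b ^ l := h
    _ = ((b - t) * a ^ l + (t - a) * b ^ l) / (b - a) := by ring

/-- The λ-Rényi divergence `D_λ(P‖Q) = (1/(λ−1))·log ∫ (dP/dQ)^λ dQ`, where `dP/dQ`
is the Radon–Nikodym derivative. -/
noncomputable def renyiDiv {α : Type*} [MeasurableSpace α] (l : ℝ) (P Q : Measure α) : ℝ :=
  (1 / (l - 1)) * Real.log (∫ x, (P.rnDeriv Q x).toReal ^ l ∂Q)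

/-- a pure ε-DP indistinguishable pair of probability measures has
λ-Rényi divergence at most `λ·ε²/2` for every `λ > 1`. -/
theorem renyiDiv_le_of_pure_dp {α : Type*} [MeasurableSpace α]
    (P Q : Measure α) [IsProbabilityMeasure P] [IsProbabilityMeasure Q]
    (ε : ℝ) (hε : 0 ≤ ε)
    (hPQ : ∀ S : Set α, MeasurableSet S → P S ≤ ENNReal.ofReal (Real.exp ε) * Q S)
    (hQP : ∀ S : Set α, MeasurableSet S → Q S ≤ ENNReal.ofReal (Real.exp ε) * P S) :
    ∀ l : ℝ, 1 < l → renyiDiv l P Q ≤ l * ε ^ 2 / 2 := by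
  intro l hl
  set c : ENNReal := ENNReal.ofReal (Real.exp ε) with hc
  set d : ENNReal := ENNReal.ofReal (Real.exp (-ε)) with hd
  have hc_ne_top : c ≠ ∞ := ENNReal.ofReal_ne_top
  have hd_ne_top : d ≠ ∞ := ENNReal.ofReal_ne_top
  have hdc : d * c = 1 := by
    rw [hd, hc, ← ENNReal.ofReal_mul (Real.exp_nonneg _), ← Real.exp_add]
    simp
  have hPle : P ≤ c • Q := by
    rw [Measure.le_iff]
    intro s hs
    simpa [Measure.smul_apply, smul_eq_mul] using hPQ s hs
  have hQle : d • Q ≤ P := by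
    rw [Measure.le_iff]
    intro s hs
    calc (d • Q) s = d * Q s := by simp [Measure.smul_apply, smul_eq_mul]
      _ ≤ d * (c * P s) := by
          gcongr
          exact hQP s hs
      _ = (d * c) * P s := by rw [mul_assoc]
      _ = P s := by rw [hdc, one_mul]
  have hac : P ≪ Q := by
    refine Measure.AbsolutelyContinuous.mk fun s hs hs0 => ?_
    have h := hPQ s hs
    rw [hs0, mul_zero] at h
    exact le_antisymm h zero_le
  have hfin1 : IsFiniteMeasure (c • Q) := by
    constructor
    rw [Measure.smul_apply, smul_eq_mul]
    exact ENNReal.mul_lt_top hc_ne_top.lt_top (measure_lt_top Q _)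
  have hfind : IsFiniteMeasure (d • Q) := by
    constructor
    rw [Measure.smul_apply, smul_eq_mul]
    exact ENNReal.mul_lt_top hd_ne_top.lt_top (measure_lt_top Q _)
  have hfin2 : IsFiniteMeasure (c • Q - P) := isFiniteMeasure_of_le (c • Q) Measure.sub_le
  have hfin3 : IsFiniteMeasure (P - d • Q) := isFiniteMeasure_of_le P Measure.sub_le
  have h_up : ∀ᵐ x ∂Q, P.rnDeriv Q x ≤ c := by
    have hsum := Measure.rnDeriv_add' (c • Q - P) P Q
    rw [Measure.sub_add_cancel_of_le hPle] at hsum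
    filter_upwards [hsum, Measure.rnDeriv_smul_left_of_ne_top Q Q hc_ne_top,
      Measure.rnDeriv_self Q] with x hx1 hx2 hx3
    have hcx : P.rnDeriv Q x ≤ (c • Q).rnDeriv Q x := by
      rw [hx1]; exact le_add_self
    rw [hx2] at hcx
    simpa [hx3] using hcx
  have h_low : ∀ᵐ x ∂Q, d ≤ P.rnDeriv Q x := by
    have hsum := Measure.rnDeriv_add' (P - d • Q) (d • Q) Q
    rw [Measure.sub_add_cancel_of_le hQle] at hsum
    filter_upwards [hsum, Measure.rnDeriv_smul_left_of_ne_top Q Q hd_ne_top,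
      Measure.rnDeriv_self Q] with x hx1 hx2 hx3
    have hdx : (d • Q).rnDeriv Q x ≤ P.rnDeriv Q x := by
      rw [hx1]; exact le_add_self
    rw [hx2] at hdx
    simpa [hx3] using hdx
  have h_bounds : ∀ᵐ x ∂Q, Real.exp (-ε) ≤ (P.rnDeriv Q x).toReal ∧
      (P.rnDeriv Q x).toReal ≤ Real.exp ε := by
    filter_upwards [h_up, h_low, Measure.rnDeriv_ne_top P Q] with x h1 h2 h3
    exact ⟨(ENNReal.ofReal_le_iff_le_toReal h3).mp h2,
      ENNReal.toReal_le_of_le_ofReal (Real.exp_nonneg ε) h1⟩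
  have hint_r : ∫ x, (P.rnDeriv Q x).toReal ∂Q = 1 := by
    rw [Measure.integral_toReal_rnDeriv hac]; simp
  rcases eq_or_lt_of_le hε with hε0 | hε0
  · -- ε = 0
    have hone : (fun x => (P.rnDeriv Q x).toReal ^ l) =ᵐ[Q] fun _ => (1 : ℝ) := by
      filter_upwards [h_bounds] with x hx
      have hx1 : (P.rnDeriv Q x).toReal = 1 := by
        have h1 := hx.1
        have h2 := hx.2
        rw [← hε0] at h1 h2
        simp only [neg_zero, Real.exp_zero] at h1 h2
        linarith
      rw [hx1, Real.one_rpow]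
    rw [renyiDiv, integral_congr_ae hone]
    rw [← hε0]
    simp
  · -- 0 < ε
    set a := Real.exp (-ε) with ha_def
    set b := Real.exp ε with hb_def
    have hab : a < b := Real.exp_lt_exp.mpr (by linarith)
    have ha : 0 < a := Real.exp_pos _
    have hl0 : (0:ℝ) ≤ l := by linarith
    have hf_meas : Measurable fun x => (P.rnDeriv Q x).toReal ^ l :=
      (Real.continuous_rpow_const hl0).measurable.comp
        (Measure.measurable_rnDeriv P Q).ennreal_toReal
    have hr_int : Integrable (fun x => (P.rnDeriv Q x).toReal) Q :=
      Measure.integrable_toReal_rnDeriv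
    have hf_int : Integrable (fun x => (P.rnDeriv Q x).toReal ^ l) Q := by
      refine Integrable.mono' (integrable_const (b ^ l)) hf_meas.aestronglyMeasurable ?_
      filter_upwards [h_bounds] with x hx
      rw [Real.norm_eq_abs, abs_of_nonneg (Real.rpow_nonneg ENNReal.toReal_nonneg l)]
      exact Real.rpow_le_rpow ENNReal.toReal_nonneg hx.2 hl0
    have hg1_int : Integrable (fun x => (b - (P.rnDeriv Q x).toReal) * a ^ l) Q :=
      ((integrable_const b).sub hr_int).mul_const _
    have hg2_int : Integrable (fun x => ((P.rnDeriv Q x).toReal - a) * b ^ l) Q :=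
      (hr_int.sub (integrable_const a)).mul_const _
    have hg_int : Integrable (fun x =>
        ((b - (P.rnDeriv Q x).toReal) * a ^ l + ((P.rnDeriv Q x).toReal - a) * b ^ l)
          / (b - a)) Q := (hg1_int.add hg2_int).div_const _
    have hmono : ∫ x, (P.rnDeriv Q x).toReal ^ l ∂Q ≤
        ∫ x, ((b - (P.rnDeriv Q x).toReal) * a ^ l
          + ((P.rnDeriv Q x).toReal - a) * b ^ l) / (b - a) ∂Q := by
      refine integral_mono_ae hf_int hg_int ?_
      filter_upwards [h_bounds] with x hx
      exact my_chord ha.le hab hx.1 hx.2 hl.le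
    have hgval : ∫ x, ((b - (P.rnDeriv Q x).toReal) * a ^ l
          + ((P.rnDeriv Q x).toReal - a) * b ^ l) / (b - a) ∂Q
        = ((b - 1) * a ^ l + (1 - a) * b ^ l) / (b - a) := by
      rw [integral_div]
      congr 1
      rw [integral_add hg1_int hg2_int, integral_mul_const, integral_mul_const,
        integral_sub (integrable_const b) hr_int, integral_sub hr_int (integrable_const a),
        hint_r, integral_const]
      simp
    have hkey : ((b - 1) * a ^ l + (1 - a) * b ^ l) / (b - a)
        ≤ Real.exp (l * (l - 1) * ε ^ 2 / 2) := by
      rw [div_le_iff₀ (by linarith : (0:ℝ) < b - a)]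
      calc (b - 1) * a ^ l + (1 - a) * b ^ l
          ≤ (b - a) * Real.exp (l * (l - 1) * ε ^ 2 / 2) := my_key_scalar ε l hε hl
        _ = Real.exp (l * (l - 1) * ε ^ 2 / 2) * (b - a) := mul_comm _ _
    have hpos : 0 < ∫ x, (P.rnDeriv Q x).toReal ^ l ∂Q := by
      have hge : a ^ l ≤ ∫ x, (P.rnDeriv Q x).toReal ^ l ∂Q := by
        have h := integral_mono_ae (integrable_const (a ^ l)) hf_int ?_
        · simpa using h
        · filter_upwards [h_bounds] with x hx
          exact Real.rpow_le_rpow ha.le hx.1 hl0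
      exact lt_of_lt_of_le (Real.rpow_pos_of_pos ha l) hge
    have hlog : Real.log (∫ x, (P.rnDeriv Q x).toReal ^ l ∂Q) ≤ l * (l - 1) * ε ^ 2 / 2 := by
      rw [Real.log_le_iff_le_exp hpos]
      exact hmono.trans (hgval ▸ hkey)
    have hl1 : (0:ℝ) < l - 1 := by linarith
    rw [renyiDiv]
    calc (1 / (l - 1)) * Real.log (∫ x, (P.rnDeriv Q x).toReal ^ l ∂Q)
        ≤ (1 / (l - 1)) * (l * (l - 1) * ε ^ 2 / 2) :=
          mul_le_mul_of_nonneg_left hlog (by positivity)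
      _ = l * ε ^ 2 / 2 := by field_simp
end

section
/- Let P and Q be probability measures on a measurable space such that P(S) ≤ e^{ε̃}·Q(S) and Q(S) ≤ e^{ε̃}·P(S) for every measurable set S, with ε̃ ≥ 0, and let γ ∈ [0,1]. Set P′ = γ·P + (1−γ)·Q and ε′ = log(1 + γ·(e^{ε̃} − 1)). Then (i) P′(S) ≤ e^{ε′}·Q(S) and Q(S) ≤ e^{ε′}·P′(S) for every measurable S, and (ii) for every λ > 1, the λ-Rényi divergence satisfies D_λ(P′‖Q) ≤ λ·(log(1 + γ·(e^{ε̃} − 1)))²/2. -/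
open MeasureTheory

lemma aux_sinh_le : ∀ s : ℝ, 0 ≤ s → Real.sinh s ≤ s * Real.cosh s := by
  have hmono : MonotoneOn (fun x : ℝ => x * Real.cosh x - Real.sinh x) (Set.Ici 0) := by
    apply monotoneOn_of_deriv_nonneg (convex_Ici 0)
    · fun_prop
    · intro x hx
      exact ((hasDerivAt_id x).mul (Real.hasDerivAt_cosh x)).sub
        (Real.hasDerivAt_sinh x) |>.differentiableAt.differentiableWithinAt
    · intro x hx
      have hd : HasDerivAt (fun x : ℝ => x * Real.cosh x - Real.sinh x)
          (1 * Real.cosh x + x * Real.sinh x - Real.cosh x) x :=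
        ((hasDerivAt_id x).mul (Real.hasDerivAt_cosh x)).sub (Real.hasDerivAt_sinh x)
      rw [hd.deriv]
      have hx0 : 0 ≤ x := le_of_lt (by simpa using hx)
      have hs : 0 ≤ Real.sinh x := by
        rw [← Real.sinh_zero]; exact Real.sinh_le_sinh.2 hx0
      nlinarith
  intro s hs
  have := hmono (Set.self_mem_Ici) (Set.mem_Ici.2 hs) hs
  simp at this
  linarith

lemma aux_cosh_ratio {a b : ℝ} (hb : 0 ≤ b) (hab : b ≤ a) :
    Real.cosh a * Real.exp (b ^ 2 / 2) ≤ Real.cosh b * Real.exp (a ^ 2 / 2) := by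
  have hmono : MonotoneOn (fun x : ℝ => x ^ 2 / 2 - Real.log (Real.cosh x)) (Set.Ici 0) := by
    apply monotoneOn_of_deriv_nonneg (convex_Ici 0)
    · have : Continuous fun x : ℝ => x ^ 2 / 2 - Real.log (Real.cosh x) :=
        Continuous.sub (by fun_prop)
          (Real.continuous_cosh.log fun x => (Real.cosh_pos x).ne')
      exact this.continuousOn
    · intro x hx
      exact (((differentiableAt_pow 2).div_const 2).sub
        ((Real.differentiable_cosh x).log (Real.cosh_pos x).ne')).differentiableWithinAt
    · intro x hx
      have hx0 : 0 ≤ x := le_of_lt (by simpa using hx)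
      have hd : HasDerivAt (fun x : ℝ => x ^ 2 / 2 - Real.log (Real.cosh x))
          ((2 * x ^ 1) / 2 - Real.sinh x / Real.cosh x) x := by
        exact ((hasDerivAt_pow 2 x).div_const 2).sub
          ((Real.hasDerivAt_cosh x).log (Real.cosh_pos x).ne')
      rw [hd.deriv]
      have h1 := aux_sinh_le x hx0
      have h2 := Real.cosh_pos x
      rw [sub_nonneg, div_le_iff₀ h2]
      nlinarith
  have h := hmono (Set.mem_Ici.2 hb) (Set.mem_Ici.2 (hb.trans hab)) hab
  simp only at h
  have hca := Real.cosh_pos a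
  have hcb := Real.cosh_pos b
  have : Real.log (Real.cosh a) + b ^ 2 / 2 ≤ Real.log (Real.cosh b) + a ^ 2 / 2 := by linarith
  calc Real.cosh a * Real.exp (b ^ 2 / 2)
      = Real.exp (Real.log (Real.cosh a) + b ^ 2 / 2) := by
        rw [Real.exp_add, Real.exp_log hca]
    _ ≤ Real.exp (Real.log (Real.cosh b) + a ^ 2 / 2) := Real.exp_le_exp.2 this
    _ = Real.cosh b * Real.exp (a ^ 2 / 2) := by rw [Real.exp_add, Real.exp_log hcb]

lemma aux_key_scalar {t l : ℝ} (ht : 0 ≤ t) (hl : 1 ≤ l) :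
    (Real.exp t - 1) * Real.exp (-t) ^ l + (1 - Real.exp (-t)) * Real.exp t ^ l
      ≤ (Real.exp t - Real.exp (-t)) * Real.exp (l * (l - 1) * t ^ 2 / 2) := by
  set x := Real.exp (t / 2) with hxdef
  set y := Real.exp ((l - 1/2) * t) with hydef
  have hx1 : 1 ≤ x := Real.one_le_exp (by linarith)
  have hx0 : (0:ℝ) < x := lt_of_lt_of_le one_pos hx1
  have hy0 : (0:ℝ) < y := Real.exp_pos _
  have het : Real.exp t = x ^ 2 := by
    rw [hxdef, ← Real.exp_nat_mul]; norm_num; ring_nf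
  have hent : Real.exp (-t) = (x ^ 2)⁻¹ := by
    rw [← het, Real.exp_neg]
  have hetl : Real.exp t ^ l = x * y := by
    rw [← Real.exp_mul, hxdef, hydef, ← Real.exp_add]; ring_nf
  have hentl : Real.exp (-t) ^ l = (x * y)⁻¹ := by
    rw [← Real.exp_mul, ← hetl, ← Real.exp_mul, ← Real.exp_neg]; ring_nf
  have hcosh := aux_cosh_ratio (a := (l - 1/2) * t) (b := t / 2)
    (by linarith) (by nlinarith)
  have hEeq : Real.exp (((l - 1/2) * t) ^ 2 / 2)
      = Real.exp ((t / 2) ^ 2 / 2) * Real.exp (l * (l - 1) * t ^ 2 / 2) := by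
    rw [← Real.exp_add]; ring_nf
  rw [Real.cosh_eq, Real.cosh_eq, hEeq] at hcosh
  have h1 : Real.exp (-((l - 1/2) * t)) = y⁻¹ := by rw [Real.exp_neg, hydef]
  have h2 : Real.exp (-(t/2)) = x⁻¹ := by rw [Real.exp_neg, hxdef]
  rw [h1, h2, ← hydef, ← hxdef] at hcosh
  have hB : 0 < Real.exp ((t / 2) ^ 2 / 2) := Real.exp_pos _
  -- From hcosh: (y + y⁻¹)/2 * B ≤ (x + x⁻¹)/2 * (B * E)
  have hyx : y + y⁻¹ ≤ (x + x⁻¹) * Real.exp (l * (l - 1) * t ^ 2 / 2) := by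
    have := hcosh
    rw [div_mul_eq_mul_div, div_mul_eq_mul_div, div_le_div_iff_of_pos_right (by norm_num)] at this
    calc y + y⁻¹ = (y + y⁻¹) * Real.exp ((t / 2) ^ 2 / 2) / Real.exp ((t / 2) ^ 2 / 2) := by
          field_simp
      _ ≤ (x + x⁻¹) * (Real.exp ((t / 2) ^ 2 / 2) * Real.exp (l * (l - 1) * t ^ 2 / 2)) /
            Real.exp ((t / 2) ^ 2 / 2) := by
          exact div_le_div_of_nonneg_right this hB.le
      _ = (x + x⁻¹) * Real.exp (l * (l - 1) * t ^ 2 / 2) := by field_simp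
  set E := Real.exp (l * (l - 1) * t ^ 2 / 2) with hEdef
  rw [hentl, hetl, het, hent]
  have hxsub : 0 ≤ x - x⁻¹ := by
    rw [sub_nonneg]; exact inv_le_one_of_one_le₀ hx1 |>.trans hx1
  have e1 : (x ^ 2 - 1) * (x * y)⁻¹ + (1 - (x ^ 2)⁻¹) * (x * y) = (x - x⁻¹) * (y + y⁻¹) := by
    field_simp; ring
  have e2 : (x ^ 2 - (x ^ 2)⁻¹) = (x - x⁻¹) * (x + x⁻¹) := by
    field_simp; ring
  rw [e1, e2, mul_assoc]
  exact mul_le_mul_of_nonneg_left hyx hxsub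

lemma aux_chord {u v r l : ℝ} (hu : 0 ≤ u) (hur : u ≤ r) (hrv : r ≤ v) (hl : 1 ≤ l) :
    (v - u) * r ^ l ≤ (v - r) * u ^ l + (r - u) * v ^ l := by
  rcases eq_or_lt_of_le (hur.trans hrv) with h | h
  · have h1 : u = r := le_antisymm hur (by linarith)
    have h2 : r = v := le_antisymm hrv (by linarith)
    subst h1; subst h2
    simp [sub_self]
  · have hvu : 0 < v - u := by linarith
    have ha : (0:ℝ) ≤ (v - r) / (v - u) := div_nonneg (by linarith) hvu.le
    have hb : (0:ℝ) ≤ (r - u) / (v - u) := div_nonneg (by linarith) hvu.le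
    have hab : (v - r) / (v - u) + (r - u) / (v - u) = 1 := by field_simp; ring
    have key := (convexOn_rpow hl).2 (Set.mem_Ici.2 hu)
      (Set.mem_Ici.2 (hu.trans (hur.trans hrv))) ha hb hab
    have harg : ((v - r) / (v - u)) • u + ((r - u) / (v - u)) • v = r := by
      simp only [smul_eq_mul]; field_simp; ring
    rw [harg] at key
    simp only [smul_eq_mul] at key
    have := mul_le_mul_of_nonneg_left key hvu.le
    calc (v - u) * r ^ l ≤ (v - u) * ((v - r) / (v - u) * u ^ l + (r - u) / (v - u) * v ^ l) := this
      _ = (v - r) * u ^ l + (r - u) * v ^ l := by field_simp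


/-- per-iteration privacy guarantee of Camel at the measure level.
If `P, Q` are pure `ε̃`-DP indistinguishable and `γ ∈ [0,1]`, then the subsampled
mixture `P' = γP + (1−γ)Q` is pure `ε'`-DP indistinguishable from `Q` with
`ε' = log(1 + γ(e^{ε̃} − 1))`, and `D_λ(P'‖Q) ≤ λ·log²(1 + γ(e^{ε̃} − 1))/2` for all `λ > 1`. -/
theorem subsampled_shuffle_renyi_bound {α : Type*} [MeasurableSpace α]
    (P Q : Measure α) [IsProbabilityMeasure P] [IsProbabilityMeasure Q]
    (ε γ : ℝ) (hε : 0 ≤ ε) (hγ0 : 0 ≤ γ) (hγ1 : γ ≤ 1)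
    (hPQ : ∀ S : Set α, MeasurableSet S → P S ≤ ENNReal.ofReal (Real.exp ε) * Q S)
    (hQP : ∀ S : Set α, MeasurableSet S → Q S ≤ ENNReal.ofReal (Real.exp ε) * P S) :
    (∀ S : Set α, MeasurableSet S →
        (ENNReal.ofReal γ • P + ENNReal.ofReal (1 - γ) • Q) S ≤
          ENNReal.ofReal (Real.exp (Real.log (1 + γ * (Real.exp ε - 1)))) * Q S ∧
        Q S ≤ ENNReal.ofReal (Real.exp (Real.log (1 + γ * (Real.exp ε - 1)))) *
          (ENNReal.ofReal γ • P + ENNReal.ofReal (1 - γ) • Q) S) ∧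
    ∀ l : ℝ, 1 < l →
      renyiDiv l (ENNReal.ofReal γ • P + ENNReal.ofReal (1 - γ) • Q) Q ≤
        l * (Real.log (1 + γ * (Real.exp ε - 1))) ^ 2 / 2 := by
  set c : ℝ := 1 + γ * (Real.exp ε - 1) with hcdef
  have hE1 : 1 ≤ Real.exp ε := Real.one_le_exp hε
  have hc1 : 1 ≤ c := by nlinarith
  have hc0 : (0:ℝ) < c := lt_of_lt_of_le one_pos hc1
  have hexplog : Real.exp (Real.log c) = c := Real.exp_log hc0
  set P' := ENNReal.ofReal γ • P + ENNReal.ofReal (1 - γ) • Q with hP'def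
  have hγ1' : 0 ≤ 1 - γ := by linarith
  have happ : ∀ S : Set α, P' S = ENNReal.ofReal γ * P S + ENNReal.ofReal (1 - γ) * Q S := by
    intro S
    simp [hP'def, Measure.add_apply, Measure.smul_apply, smul_eq_mul]
  have hupper : ∀ S : Set α, MeasurableSet S → P' S ≤ ENNReal.ofReal c * Q S := by
    intro S hS
    rw [happ]
    calc ENNReal.ofReal γ * P S + ENNReal.ofReal (1 - γ) * Q S
        ≤ ENNReal.ofReal γ * (ENNReal.ofReal (Real.exp ε) * Q S) +
            ENNReal.ofReal (1 - γ) * Q S :=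
          add_le_add_left (mul_le_mul_right (hPQ S hS) _) _
      _ = (ENNReal.ofReal (γ * Real.exp ε) + ENNReal.ofReal (1 - γ)) * Q S := by
          rw [ENNReal.ofReal_mul hγ0, add_mul, mul_assoc]
      _ = ENNReal.ofReal c * Q S := by
          rw [← ENNReal.ofReal_add (by positivity) hγ1']
          congr 1
          rw [hcdef]; ring
  have hlower : ∀ S : Set α, MeasurableSet S → Q S ≤ ENNReal.ofReal c * P' S := by
    intro S hS
    have hPge : ENNReal.ofReal (γ * Real.exp (-ε)) * Q S ≤ ENNReal.ofReal γ * P S := by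
      calc ENNReal.ofReal (γ * Real.exp (-ε)) * Q S
          ≤ ENNReal.ofReal (γ * Real.exp (-ε)) * (ENNReal.ofReal (Real.exp ε) * P S) :=
            mul_le_mul_right (hQP S hS) _
        _ = ENNReal.ofReal (γ * Real.exp (-ε) * Real.exp ε) * P S := by
            rw [← mul_assoc, ← ENNReal.ofReal_mul (by positivity)]
        _ = ENNReal.ofReal γ * P S := by
            congr 2
            rw [Real.exp_neg]
            field_simp
    set d : ℝ := γ * Real.exp (-ε) + (1 - γ) with hddef
    have hcd : 1 ≤ c * d := by
      have hEi : Real.exp (-ε) * Real.exp ε = 1 := by rw [← Real.exp_add]; simp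
      have hEipos : (0:ℝ) < Real.exp (-ε) := Real.exp_pos _
      have hiden : (1 + γ * (Real.exp ε - 1)) * (γ * Real.exp (-ε) + (1 - γ))
          = 1 + γ * (1 - γ) * (Real.exp ε - 1) ^ 2 * Real.exp (-ε) := by
        have hEne : Real.exp ε ≠ 0 := (Real.exp_pos ε).ne'
        rw [Real.exp_neg]
        field_simp
        ring
      rw [hcdef, hddef, hiden]
      nlinarith [mul_nonneg (mul_nonneg (mul_nonneg hγ0 hγ1') (sq_nonneg (Real.exp ε - 1))) hEipos.le]
    calc Q S = 1 * Q S := (one_mul _).symm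
      _ ≤ ENNReal.ofReal (c * d) * Q S :=
          mul_le_mul_left (by rwa [ENNReal.one_le_ofReal]) _
      _ = ENNReal.ofReal c *
            (ENNReal.ofReal (γ * Real.exp (-ε)) * Q S + ENNReal.ofReal (1 - γ) * Q S) := by
          rw [ENNReal.ofReal_mul hc0.le, hddef,
            ENNReal.ofReal_add (by positivity) hγ1', mul_assoc, add_mul]
      _ ≤ ENNReal.ofReal c * P' S := by
          rw [happ]
          exact mul_le_mul_right (add_le_add_left hPge _) _
  refine ⟨fun S hS => ⟨by rw [hexplog]; exact hupper S hS,
    by rw [hexplog]; exact hlower S hS⟩, ?_⟩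
  intro l hl
  have hP'univ : P' Set.univ = 1 := by
    rw [happ, measure_univ, measure_univ, mul_one, mul_one,
      ← ENNReal.ofReal_add hγ0 hγ1']
    norm_num
  haveI : IsProbabilityMeasure P' := ⟨hP'univ⟩
  have hac : P' ≪ Q := by
    refine Measure.AbsolutelyContinuous.mk fun S hS hS0 => ?_
    have := hupper S hS
    rw [hS0, mul_zero] at this
    exact le_antisymm this zero_le
  have hub : ∀ᵐ x ∂Q, P'.rnDeriv Q x ≤ ENNReal.ofReal c := by
    apply ae_le_of_forall_setLIntegral_le_of_sigmaFinite (P'.measurable_rnDeriv Q)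
    intro s hs _
    rw [Measure.setLIntegral_rnDeriv hac, setLIntegral_const]
    exact hupper s hs
  have hlb : ∀ᵐ x ∂Q, ENNReal.ofReal c⁻¹ ≤ P'.rnDeriv Q x := by
    apply ae_le_of_forall_setLIntegral_le_of_sigmaFinite measurable_const
    intro s hs _
    rw [setLIntegral_const, Measure.setLIntegral_rnDeriv hac]
    calc ENNReal.ofReal c⁻¹ * Q s ≤ ENNReal.ofReal c⁻¹ * (ENNReal.ofReal c * P' s) :=
        mul_le_mul_right (hlower s hs) _
      _ = P' s := by
        rw [← mul_assoc, ← ENNReal.ofReal_mul (by positivity),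
          inv_mul_cancel₀ hc0.ne', ENNReal.ofReal_one, one_mul]
  have hr_bounds : ∀ᵐ x ∂Q, c⁻¹ ≤ (P'.rnDeriv Q x).toReal ∧ (P'.rnDeriv Q x).toReal ≤ c := by
    filter_upwards [hub, hlb, P'.rnDeriv_lt_top Q] with x h1 h2 h3
    exact ⟨(ENNReal.ofReal_le_iff_le_toReal h3.ne).1 h2,
      ENNReal.toReal_le_of_le_ofReal hc0.le h1⟩
  have hint1 : ∫ x, (P'.rnDeriv Q x).toReal ∂Q = 1 := by
    rw [Measure.integral_toReal_rnDeriv hac, measureReal_def, hP'univ, ENNReal.toReal_one]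
  have hmeas : Measurable fun x => (P'.rnDeriv Q x).toReal :=
    (P'.measurable_rnDeriv Q).ennreal_toReal
  have hint_r : Integrable (fun x => (P'.rnDeriv Q x).toReal) Q := by
    refine Integrable.mono' (integrable_const c) hmeas.aestronglyMeasurable ?_
    filter_upwards [hr_bounds] with x hx
    rw [Real.norm_eq_abs, abs_of_nonneg ENNReal.toReal_nonneg]
    exact hx.2
  have hmeasl : Measurable fun x => (P'.rnDeriv Q x).toReal ^ l :=
    hmeas.pow measurable_const
  have hint_rl : Integrable (fun x => (P'.rnDeriv Q x).toReal ^ l) Q := by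
    refine Integrable.mono' (integrable_const (c ^ l)) hmeasl.aestronglyMeasurable ?_
    filter_upwards [hr_bounds] with x hx
    rw [Real.norm_eq_abs, abs_of_nonneg (Real.rpow_nonneg ENNReal.toReal_nonneg l)]
    exact Real.rpow_le_rpow ENNReal.toReal_nonneg hx.2 (by linarith)
  have hX0 : 0 ≤ ∫ x, (P'.rnDeriv Q x).toReal ^ l ∂Q :=
    integral_nonneg fun x => Real.rpow_nonneg ENNReal.toReal_nonneg l
  rcases eq_or_lt_of_le hc1 with hceq | hclt
  · -- degenerate case c = 1
    have hre1 : (fun x => (P'.rnDeriv Q x).toReal ^ l) =ᵐ[Q] fun _ => (1:ℝ) := by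
      filter_upwards [hr_bounds] with x hx
      have h1 : (P'.rnDeriv Q x).toReal = 1 := by
        have ha := hx.1
        have hb := hx.2
        rw [← hceq] at ha hb
        simpa using le_antisymm hb (by simpa using ha)
      rw [h1, Real.one_rpow]
    rw [renyiDiv, integral_congr_ae hre1, integral_const]
    have hlog : Real.log c = 0 := by rw [← hceq, Real.log_one]
    rw [hlog]
    simp [measure_univ]
  · -- main case c > 1
    have hcc : (0:ℝ) < c - c⁻¹ := by
      nlinarith [mul_inv_cancel₀ hc0.ne', inv_pos.2 hc0]
    have hmain : (c - c⁻¹) * ∫ x, (P'.rnDeriv Q x).toReal ^ l ∂Q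
        ≤ (c - c⁻¹) * Real.exp (l * (l - 1) * (Real.log c) ^ 2 / 2) := by
      have hchord : ∀ᵐ x ∂Q, (c - c⁻¹) * (P'.rnDeriv Q x).toReal ^ l
          ≤ (c - (P'.rnDeriv Q x).toReal) * (c⁻¹) ^ l +
            ((P'.rnDeriv Q x).toReal - c⁻¹) * c ^ l := by
        filter_upwards [hr_bounds] with x hx
        exact aux_chord (by positivity) hx.1 hx.2 hl.le
      have hi1 : Integrable (fun x => c - (P'.rnDeriv Q x).toReal) Q :=
        (integrable_const c).sub hint_r
      have hi2 : Integrable (fun x => (P'.rnDeriv Q x).toReal - c⁻¹) Q :=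
        hint_r.sub (integrable_const c⁻¹)
      have hint_rhs : Integrable (fun x => (c - (P'.rnDeriv Q x).toReal) * (c⁻¹) ^ l +
          ((P'.rnDeriv Q x).toReal - c⁻¹) * c ^ l) Q :=
        (hi1.mul_const _).add (hi2.mul_const _)
      have hstep : (c - c⁻¹) * ∫ x, (P'.rnDeriv Q x).toReal ^ l ∂Q
          ≤ (c - 1) * (c⁻¹) ^ l + (1 - c⁻¹) * c ^ l := by
        calc (c - c⁻¹) * ∫ x, (P'.rnDeriv Q x).toReal ^ l ∂Q
            = ∫ x, (c - c⁻¹) * (P'.rnDeriv Q x).toReal ^ l ∂Q :=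
              (integral_const_mul _ _).symm
          _ ≤ ∫ x, ((c - (P'.rnDeriv Q x).toReal) * (c⁻¹) ^ l +
                ((P'.rnDeriv Q x).toReal - c⁻¹) * c ^ l) ∂Q :=
              integral_mono_ae (hint_rl.const_mul _) hint_rhs hchord
          _ = (∫ x, (c - (P'.rnDeriv Q x).toReal) ∂Q) * (c⁻¹) ^ l +
                (∫ x, ((P'.rnDeriv Q x).toReal - c⁻¹) ∂Q) * c ^ l := by
              rw [integral_add (hi1.mul_const _) (hi2.mul_const _),
                integral_mul_const, integral_mul_const]
          _ = (c - 1) * (c⁻¹) ^ l + (1 - c⁻¹) * c ^ l := by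
              rw [integral_sub (integrable_const c) hint_r,
                integral_sub hint_r (integrable_const c⁻¹), hint1,
                integral_const, integral_const]
              simp [measure_univ]
      have hkey := aux_key_scalar (Real.log_nonneg hc1) hl.le
      rw [Real.exp_neg, hexplog] at hkey
      exact hstep.trans hkey
    have hXle : ∫ x, (P'.rnDeriv Q x).toReal ^ l ∂Q
        ≤ Real.exp (l * (l - 1) * (Real.log c) ^ 2 / 2) :=
      le_of_mul_le_mul_left hmain hcc
    have hlog_le : Real.log (∫ x, (P'.rnDeriv Q x).toReal ^ l ∂Q)
        ≤ l * (l - 1) * (Real.log c) ^ 2 / 2 := by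
      rcases eq_or_lt_of_le hX0 with h0 | h0
      · rw [← h0, Real.log_zero]
        have h := mul_nonneg (mul_nonneg (by linarith : (0:ℝ) ≤ l)
          (by linarith : (0:ℝ) ≤ l - 1)) (sq_nonneg (Real.log c))
        linarith
      · exact (Real.log_le_iff_le_exp h0).2 hXle
    rw [renyiDiv]
    calc (1 / (l - 1)) * Real.log (∫ x, (P'.rnDeriv Q x).toReal ^ l ∂Q)
        ≤ (1 / (l - 1)) * (l * (l - 1) * (Real.log c) ^ 2 / 2) :=
          mul_le_mul_of_nonneg_left hlog_le (one_div_nonneg.2 (by linarith))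
      _ = l * (Real.log c) ^ 2 / 2 := by
          have : l - 1 ≠ 0 := by linarith
          field_simp
end
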